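/- arXiv:2306.04278 — 4 statements merged into one kernel-verified Lean document; each statement's English description precedes it below -/
import Mathlib

section
/- Let f and f_1, f_2, … be measurable functions from [0,1] to [0,1]. Then the following are equivalent: (i) f_n → f in L^p([0,1]) for some p ∈ [1,∞); (ii) f_n → f in L^p([0,1]) for every p ∈ [1,∞); (iii) the pushforward measures (x ↦ (x, f_n(x)))_# Leb converge weakly to (x ↦ (x, f(x)))_# Leb as probability measures on [0,1]². -/
/-!
Because all functions take values in `[0,1]`, they are uniformly integrable, so by Vitali's
theorem `L^p` convergence for any finite `p ≥ 1` is equivalent to convergence in measure.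
Convergence in measure of `f n` to `g` is convergence in measure of the graph maps
`x ↦ (x, f n x)`, which implies convergence in distribution. Conversely, approximate `g` in `L¹`
by a bounded continuous `G` and test against `Φ (x, y) = min ‖y - G x‖ 1`: the limit
`∫ Φ (x, g x)` is at most `‖g - G‖₁`, and `min ‖f n - g‖ 1 ≤ Φ (x, f n x) + ‖g - G‖`, so the
truncated `L¹` distance from `f n` to `g` tends to `0`; by Markov's inequality this is
convergence in measure.
-/

open MeasureTheory Filter Topology
open scoped ENNReal NNReal BoundedContinuousFunction

namespace MeasureTheory

section NormedGroup

variable {α E : Type*} {m : MeasurableSpace α} {μ : Measure α} [NormedAddCommGroup E]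

theorem unifIntegrable_of_ae_norm_le {ι : Type*} {f : ι → α → E} {p : ℝ≥0∞} (hp : 1 ≤ p)
    (hp' : p ≠ ∞) (hf : ∀ i, AEStronglyMeasurable (f i) μ) {C : ℝ}
    (hC : ∀ i, ∀ᵐ x ∂μ, ‖f i x‖ ≤ C) : UnifIntegrable f p μ := by
  refine unifIntegrable_of hp hp' hf fun ε hε => ⟨C.toNNReal + 1, fun i => ?_⟩
  have hnull : {x | C.toNNReal + 1 ≤ ‖f i x‖₊}.indicator (f i) =ᵐ[μ] 0 := by
    filter_upwards [hC i] with x hx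
    refine Set.indicator_of_notMem (fun hmem => ?_) _
    have : (C.toNNReal : ℝ) + 1 ≤ ‖f i x‖ := by exact_mod_cast hmem
    linarith [C.le_coe_toNNReal]
  rw [eLpNorm_congr_ae hnull, eLpNorm_zero]
  exact zero_le

theorem tendsto_eLpNorm_sub_iff_tendstoInMeasure [IsFiniteMeasure μ] {f : ℕ → α → E} {g : α → E}
    {p : ℝ≥0∞} (hp : 1 ≤ p) (hp' : p ≠ ∞) (hf : ∀ n, AEStronglyMeasurable (f n) μ)
    (hg : AEStronglyMeasurable g μ) {C : ℝ} (hfC : ∀ n, ∀ᵐ x ∂μ, ‖f n x‖ ≤ C)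
    (hgC : ∀ᵐ x ∂μ, ‖g x‖ ≤ C) :
    Tendsto (fun n => eLpNorm (f n - g) p μ) atTop (𝓝 0) ↔ TendstoInMeasure μ f atTop g := by
  rw [← tendstoInMeasure_iff_tendsto_Lp_finite hp hp' (fun n => .of_bound (hf n) C (hfC n))
    (.of_bound hg C hgC)]
  exact ⟨And.left, fun h => ⟨h, unifIntegrable_of_ae_norm_le hp hp' hf hfC⟩⟩

theorem integrable_min_norm_one [IsFiniteMeasure μ] {u : α → E} (hu : AEStronglyMeasurable u μ) :
    Integrable (fun x => min ‖u x‖ 1) μ :=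
  (integrable_const (1 : ℝ)).mono' (hu.norm.inf aestronglyMeasurable_const) <|
    ae_of_all _ fun x => by
      rw [Real.norm_of_nonneg (le_min (norm_nonneg _) zero_le_one)]
      exact min_le_right _ _

theorem tendstoInMeasure_of_tendsto_integral_min_norm_sub_one [IsFiniteMeasure μ] {ι : Type*}
    {l : Filter ι} {f : ι → α → E} {g : α → E} (hf : ∀ i, AEStronglyMeasurable (f i) μ)
    (hg : AEStronglyMeasurable g μ)
    (h : Tendsto (fun i => ∫ x, min ‖f i x - g x‖ 1 ∂μ) l (𝓝 0)) :
    TendstoInMeasure μ f l g := by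
  rw [tendstoInMeasure_iff_measureReal_norm]
  intro ε hε
  have hδ : 0 < min ε 1 := lt_min hε zero_lt_one
  have markov : ∀ i, μ.real {x | ε ≤ ‖f i x - g x‖} ≤
      (min ε 1)⁻¹ * ∫ x, min ‖f i x - g x‖ 1 ∂μ := fun i =>
    calc μ.real {x | ε ≤ ‖f i x - g x‖}
        ≤ μ.real {x | min ε 1 ≤ min ‖f i x - g x‖ 1} :=
          measureReal_mono fun x (hx : ε ≤ _) => min_le_min_right 1 hx
      _ ≤ (min ε 1)⁻¹ * ∫ x, min ‖f i x - g x‖ 1 ∂μ := by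
          rw [le_inv_mul_iff₀ hδ]
          exact mul_meas_ge_le_integral_of_nonneg
            (ae_of_all _ fun x => le_min (norm_nonneg _) zero_le_one)
            (integrable_min_norm_one ((hf i).sub hg)) _
  refine tendsto_of_tendsto_of_tendsto_of_le_of_le tendsto_const_nhds ?_
    (fun i => measureReal_nonneg) markov
  simpa using h.const_mul (min ε 1)⁻¹

theorem min_norm_sub_one_le (a b c : E) : min ‖a - b‖ 1 ≤ min ‖a - c‖ 1 + ‖c - b‖ := by
  rcases le_total ‖a - c‖ 1 with h | h
  · rw [min_eq_left h]
    exact (min_le_left _ _).trans (norm_sub_le_norm_sub_add_norm_sub a c b)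
  · rw [min_eq_right h]
    exact (min_le_right _ _).trans (le_add_of_nonneg_right (norm_nonneg _))

end NormedGroup

section Graph

variable {α E : Type*} {m : MeasurableSpace α} {μ : Measure α}

theorem TendstoInMeasure.graph [PseudoEMetricSpace α] [PseudoEMetricSpace E] {ι : Type*}
    {l : Filter ι} {f : ι → α → E} {g : α → E} (h : TendstoInMeasure μ f l g) :
    TendstoInMeasure μ (fun i x => (x, f i x)) l (fun x => (x, g x)) := by
  intro ε hε
  simpa [Prod.edist_eq] using h ε hε

theorem tendsto_integral_min_norm_sub_one_of_tendsto_integral_graph [TopologicalSpace α]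
    [NormalSpace α] [BorelSpace α] [IsFiniteMeasure μ] [μ.WeaklyRegular] [NormedAddCommGroup E]
    [NormedSpace ℝ E] {f : ℕ → α → E} {g : α → E} (hf : ∀ n, AEStronglyMeasurable (f n) μ)
    (hg : Integrable g μ)
    (h : ∀ Φ : α × E →ᵇ ℝ,
      Tendsto (fun n => ∫ x, Φ (x, f n x) ∂μ) atTop (𝓝 (∫ x, Φ (x, g x) ∂μ))) :
    Tendsto (fun n => ∫ x, min ‖f n x - g x‖ 1 ∂μ) atTop (𝓝 0) := by
  refine tendsto_order.2 ⟨fun b hb => Eventually.of_forall fun n =>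
    hb.trans_le (integral_nonneg fun x => le_min (norm_nonneg _) zero_le_one), fun ε hε => ?_⟩
  obtain ⟨G, hgG, hG⟩ := hg.exists_boundedContinuous_integral_sub_le (div_pos hε three_pos)
  let Φ : α × E →ᵇ ℝ := .ofNormedAddCommGroup (fun z => min ‖z.2 - G z.1‖ 1)
    (by fun_prop) 1 fun z => by
      rw [Real.norm_of_nonneg (le_min (norm_nonneg _) zero_le_one)]
      exact min_le_right _ _
  have hΦg : ∫ x, Φ (x, g x) ∂μ ≤ ε / 3 :=
    (integral_mono (integrable_min_norm_one (hg.sub hG).1) (hg.sub hG).norm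
      fun x => min_le_left _ _).trans hgG
  filter_upwards [(h Φ).eventually_lt_const (by linarith : ∫ x, Φ (x, g x) ∂μ < 2 * ε / 3)]
    with n hn
  have hΦf : Integrable (fun x => Φ (x, f n x)) μ := integrable_min_norm_one ((hf n).sub hG.1)
  calc ∫ x, min ‖f n x - g x‖ 1 ∂μ ≤ ∫ x, (Φ (x, f n x) + ‖g x - G x‖) ∂μ :=
        integral_mono (integrable_min_norm_one ((hf n).sub hg.1)) (hΦf.add (hg.sub hG).norm)
          fun x => norm_sub_rev (g x) (G x) ▸ min_norm_sub_one_le _ _ _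
    _ = ∫ x, Φ (x, f n x) ∂μ + ∫ x, ‖g x - G x‖ ∂μ := integral_add hΦf (hg.sub hG).norm
    _ < ε := by linarith

theorem tendstoInMeasure_iff_tendsto_integral_map_graph [PseudoMetricSpace α]
    [SecondCountableTopology α] [BorelSpace α] [IsProbabilityMeasure μ] [NormedAddCommGroup E]
    [NormedSpace ℝ E] [SecondCountableTopology E] [MeasurableSpace E] [BorelSpace E]
    {f : ℕ → α → E} {g : α → E} (hf : ∀ n, AEMeasurable (f n) μ) (hg : Integrable g μ) :
    TendstoInMeasure μ f atTop g ↔ ∀ Φ : α × E →ᵇ ℝ,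
      Tendsto (fun n => ∫ z, Φ z ∂(μ.map fun x => (x, f n x))) atTop
        (𝓝 (∫ z, Φ z ∂(μ.map fun x => (x, g x)))) := by
  have hgraph {u : α → E} (hu : AEMeasurable u μ) : AEMeasurable (fun x => (x, u x)) μ :=
    aemeasurable_id.prodMk hu
  have hmap {u : α → E} (hu : AEMeasurable u μ) (Φ : α × E →ᵇ ℝ) :
      ∫ z, Φ z ∂(μ.map fun x => (x, u x)) = ∫ x, Φ (x, u x) ∂μ :=
    integral_map (hgraph hu) Φ.continuous.aestronglyMeasurable
  constructor
  · intro h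
    exact ProbabilityMeasure.tendsto_iff_forall_integral_tendsto.1
      (h.graph.tendstoInDistribution fun n => hgraph (hf n)).tendsto
  · intro h
    refine tendstoInMeasure_of_tendsto_integral_min_norm_sub_one
      (fun n => (hf n).aestronglyMeasurable) hg.1 ?_
    refine tendsto_integral_min_norm_sub_one_of_tendsto_integral_graph
      (fun n => (hf n).aestronglyMeasurable) hg fun Φ => ?_
    simpa only [hmap (hf _), hmap hg.1.aemeasurable] using h Φ

end Graph

end MeasureTheory

/-- For measurable functions `f_n, f : [0,1] → [0,1]`, convergence in `L^p` for
some `p ∈ [1,∞)`, convergence in `L^p` for all `p ∈ [1,∞)`, and weak convergence of the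
pushforward measures `(x ↦ (x, f_n(x)))_# Leb` to `(x ↦ (x, f(x)))_# Leb` are all equivalent. -/
theorem lp_convergence_tfae_pushforward_weak_convergence
    (f : ℕ → ℝ → ℝ) (g : ℝ → ℝ)
    (hf : ∀ n, Measurable (f n)) (hg : Measurable g)
    (hfmem : ∀ n, ∀ x ∈ Set.Icc (0:ℝ) 1, f n x ∈ Set.Icc (0:ℝ) 1)
    (hgmem : ∀ x ∈ Set.Icc (0:ℝ) 1, g x ∈ Set.Icc (0:ℝ) 1) :
    List.TFAE
      [ (∃ p : ℝ, 1 ≤ p ∧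
          Tendsto (fun n => eLpNorm (f n - g) (ENNReal.ofReal p)
              (volume.restrict (Set.Icc (0:ℝ) 1))) atTop (nhds 0)),
        (∀ p : ℝ, 1 ≤ p →
          Tendsto (fun n => eLpNorm (f n - g) (ENNReal.ofReal p)
              (volume.restrict (Set.Icc (0:ℝ) 1))) atTop (nhds 0)),
        (∀ F : BoundedContinuousFunction (ℝ × ℝ) ℝ,
          Tendsto (fun n => ∫ z, F z ∂(Measure.map (fun x => (x, f n x))
                (volume.restrict (Set.Icc (0:ℝ) 1)))) atTop
            (nhds (∫ z, F z ∂(Measure.map (fun x => (x, g x))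
                (volume.restrict (Set.Icc (0:ℝ) 1)))))) ] := by
  set μ := volume.restrict (Set.Icc (0:ℝ) 1)
  have : IsProbabilityMeasure μ := ⟨by simp [μ, Real.volume_Icc]⟩
  have hbound {u : ℝ → ℝ} (hu : ∀ x ∈ Set.Icc (0:ℝ) 1, u x ∈ Set.Icc (0:ℝ) 1) :
      ∀ᵐ x ∂μ, ‖u x‖ ≤ 1 := by
    filter_upwards [ae_restrict_mem measurableSet_Icc] with x hx
    exact abs_le.2 ⟨by linarith [(hu x hx).1], (hu x hx).2⟩
  have hLp (p : ℝ) (hp : 1 ≤ p) :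
      Tendsto (fun n => eLpNorm (f n - g) (ENNReal.ofReal p) μ) atTop (𝓝 0) ↔
        TendstoInMeasure μ f atTop g :=
    tendsto_eLpNorm_sub_iff_tendstoInMeasure (ENNReal.one_le_ofReal.2 hp) ENNReal.ofReal_ne_top
      (fun n => (hf n).aestronglyMeasurable) hg.aestronglyMeasurable
      (fun n => hbound (hfmem n)) (hbound hgmem)
  have hweak := tendstoInMeasure_iff_tendsto_integral_map_graph (fun n => (hf n).aemeasurable)
    (.of_bound hg.aestronglyMeasurable 1 (hbound hgmem))
  tfae_have 1 → 2 := fun ⟨p, hp, h⟩ q hq => (hLp q hq).2 ((hLp p hp).1 h)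
  tfae_have 2 → 1 := fun h => ⟨1, le_rfl, h 1 le_rfl⟩
  tfae_have 2 → 3 := fun h => hweak.1 ((hLp 1 le_rfl).1 (h 1 le_rfl))
  tfae_have 3 → 2 := fun h p hp => (hLp p hp).2 (hweak.2 h)
  tfae_finish
end

section
/- For all x, y, z ∈ [0,1], the three quantities i(x,y), i(y,z), i(x,z) can be labeled a, b, c so that a = b ≤ c; in other words, the minimum of the three is attained by at least two of them. Moreover, if i(x,y) = i(y,z) < ∞, then either (x ≺ y and z ≺ y) or (y ≺ x and y ≺ z). -/
open MeasureTheory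

/-- `I(x,y) = (min(x,y), max(x,y)]`. -/
def gapInterval (x y : ℝ) : Set ℝ := Set.Ioc (min x y) (max x y)

/-- `i(x,y) = inf { j ≥ 1 : u_j ∈ I(x,y) } ∈ ℕ ∪ {∞}` (with `inf ∅ = ∞`). -/
noncomputable def firstIdx (u : ℕ → ℝ) (x y : ℝ) : ℕ∞ :=
  sInf ((fun j : ℕ => (j : ℕ∞)) '' {j : ℕ | 1 ≤ j ∧ u j ∈ gapInterval x y})

/-- `x ≺ y` iff `i(x,y) < ∞` and `(y − x) · s_{i(x,y)} > 0`. -/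
def Prec (u s : ℕ → ℝ) (x y : ℝ) : Prop :=
  ∃ j : ℕ, firstIdx u x y = (j : ℕ∞) ∧ (y - x) * s j > 0

/-! A point `t` lies in `I(x,y)` exactly when `x < t` and `y < t` disagree, so it lies in none or
in exactly two of `I(x,y)`, `I(y,z)`, `I(x,z)`. Hence each of the three index sets is contained in
the union of the other two, which forces the minimum of the three first indices to be attained
twice. If `u_j` lies in both `I(x,y)` and `I(y,z)`, it separates `y` from both `x` and `z`, so
`y - x` and `y - z` have the same sign. -/

open scoped Interval

section LinearOrder

variable {α : Type*} [LinearOrder α] {a b c t : α}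

lemma Set.uIoc_subset_uIoc_union_uIoc : Ι a c ⊆ Ι a b ∪ Ι b c := by
  intro t
  simp only [Set.mem_union, Set.mem_uIoc]
  grind

lemma lt_and_lt_or_lt_and_lt_of_mem_uIoc_of_mem_uIoc (hab : t ∈ Ι a b) (hbc : t ∈ Ι b c) :
    (a < b ∧ c < b) ∨ (b < a ∧ b < c) := by
  rw [Set.mem_uIoc] at hab hbc
  grind

lemma min_attained_twice_of_min_le (hc : min a b ≤ c) (ha : min c b ≤ a) (hb : min a c ≤ b) :
    (a = b ∧ a ≤ c) ∨ (a = c ∧ a ≤ b) ∨ (b = c ∧ b ≤ a) := by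
  simp only [min_le_iff] at *
  grind

end LinearOrder

lemma gapInterval_eq_uIoc (x y : ℝ) : gapInterval x y = Ι x y := rfl

lemma firstIdx_comm (u : ℕ → ℝ) (x y : ℝ) : firstIdx u x y = firstIdx u y x := by
  rw [firstIdx, firstIdx, gapInterval_eq_uIoc, gapInterval_eq_uIoc, Set.uIoc_comm]

lemma min_firstIdx_le (u : ℕ → ℝ) (x y z : ℝ) :
    min (firstIdx u x y) (firstIdx u y z) ≤ firstIdx u x z := by
  have hsub : {j : ℕ | 1 ≤ j ∧ u j ∈ gapInterval x z} ⊆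
      {j | 1 ≤ j ∧ u j ∈ gapInterval x y} ∪ {j | 1 ≤ j ∧ u j ∈ gapInterval y z} :=
    fun j ⟨hj, hmem⟩ => (Set.uIoc_subset_uIoc_union_uIoc hmem).imp (⟨hj, ·⟩) (⟨hj, ·⟩)
  have := sInf_le_sInf (Set.image_mono (f := ((↑) : ℕ → ℕ∞)) hsub)
  rwa [Set.image_union, sInf_union] at this

lemma one_le_and_mem_gapInterval_of_firstIdx_eq {u : ℕ → ℝ} {x y : ℝ} {j : ℕ}
    (h : firstIdx u x y = j) : 1 ≤ j ∧ u j ∈ gapInterval x y := by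
  set S := {k : ℕ | 1 ≤ k ∧ u k ∈ gapInterval x y}
  have hS : ((↑) '' S : Set ℕ∞).Nonempty := by
    refine Set.nonempty_iff_ne_empty.mpr fun hempty => ?_
    rw [firstIdx, hempty, sInf_empty] at h
    exact ENat.top_ne_natCast j h
  obtain ⟨k, hk, hkj⟩ := csInf_mem hS
  rwa [← Nat.cast_inj.mp (hkj.trans h)]

lemma prec_iff_of_firstIdx_eq {u : ℕ → ℝ} (s : ℕ → ℝ) {x y : ℝ} {j : ℕ}
    (h : firstIdx u x y = j) : Prec u s x y ↔ (y - x) * s j > 0 := by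
  refine ⟨fun ⟨k, hk, hpos⟩ => ?_, fun hpos => ⟨j, h, hpos⟩⟩
  rwa [Nat.cast_inj.mp (hk.symm.trans h)] at hpos

theorem firstIdx_min_attained_twice_and_extremum_general
    (u s : ℕ → ℝ)
    (hs : ∀ j, 1 ≤ j → s j = 1 ∨ s j = -1)
    (x y z : ℝ) :
    ((firstIdx u x y = firstIdx u y z ∧ firstIdx u x y ≤ firstIdx u x z) ∨
     (firstIdx u x y = firstIdx u x z ∧ firstIdx u x y ≤ firstIdx u y z) ∨
     (firstIdx u y z = firstIdx u x z ∧ firstIdx u y z ≤ firstIdx u x y)) ∧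
    (firstIdx u x y = firstIdx u y z → firstIdx u x y < ⊤ →
      ((Prec u s x y ∧ Prec u s z y) ∨ (Prec u s y x ∧ Prec u s y z))) := by
  refine ⟨min_attained_twice_of_min_le (min_firstIdx_le u x y z) ?_ ?_, fun heq hlt => ?_⟩
  · simpa only [firstIdx_comm u z y] using min_firstIdx_le u x z y
  · simpa only [firstIdx_comm u y x] using min_firstIdx_le u y x z
  obtain ⟨j, hxy⟩ := ENat.ne_top_iff_exists.mp hlt.ne
  have hyz : firstIdx u y z = j := heq ▸ hxy.symm
  obtain ⟨hj, hmem_xy⟩ := one_le_and_mem_gapInterval_of_firstIdx_eq hxy.symm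
  have hmem_yz := (one_le_and_mem_gapInterval_of_firstIdx_eq hyz).2
  rw [prec_iff_of_firstIdx_eq s hxy.symm, prec_iff_of_firstIdx_eq s hyz,
    prec_iff_of_firstIdx_eq s ((firstIdx_comm u y x).trans hxy.symm),
    prec_iff_of_firstIdx_eq s ((firstIdx_comm u z y).trans hyz)]
  rcases lt_and_lt_or_lt_and_lt_of_mem_uIoc_of_mem_uIoc hmem_xy hmem_yz
    with ⟨h₁, h₂⟩ | ⟨h₁, h₂⟩ <;> rcases hs j hj with hsj | hsj <;> rw [hsj]
  exacts [.inl ⟨by linarith, by linarith⟩, .inr ⟨by linarith, by linarith⟩,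
    .inr ⟨by linarith, by linarith⟩, .inl ⟨by linarith, by linarith⟩]

/-- for `x, y, z ∈ [0,1]`, among the three indices `i(x,y), i(y,z), i(x,z)`,
the minimum is attained by at least two of them (they can be labeled `a, b, c` with
`a = b ≤ c`); moreover if `i(x,y) = i(y,z) < ∞` then either `x, z ≺ y` or `y ≺ x, z`. -/
theorem firstIdx_min_attained_twice_and_extremum
    (u s : ℕ → ℝ)
    (hu : ∀ j, 1 ≤ j → u j ∈ Set.Ioo (0:ℝ) 1)
    (hs : ∀ j, 1 ≤ j → s j = 1 ∨ s j = -1)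
    (x y z : ℝ) (hx : x ∈ Set.Icc (0:ℝ) 1) (hy : y ∈ Set.Icc (0:ℝ) 1)
    (hz : z ∈ Set.Icc (0:ℝ) 1) :
    ((firstIdx u x y = firstIdx u y z ∧ firstIdx u x y ≤ firstIdx u x z) ∨
     (firstIdx u x y = firstIdx u x z ∧ firstIdx u x y ≤ firstIdx u y z) ∨
     (firstIdx u y z = firstIdx u x z ∧ firstIdx u y z ≤ firstIdx u x y)) ∧
    (firstIdx u x y = firstIdx u y z → firstIdx u x y < ⊤ →
      ((Prec u s x y ∧ Prec u s z y) ∨ (Prec u s y x ∧ Prec u s y z))) :=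
  firstIdx_min_attained_twice_and_extremum_general u s hs x y z
end

section
/- The relation ≺ on [0,1] is a strict partial order: it is irreflexive, asymmetric, and transitive. -/
open MeasureTheory

/-!
Let `J(x,y) = {j ≥ 1 | u_j ∈ I(x,y)}`, so that `i(x,y) = min J(x,y)`. Since `t ∈ I(x,y)` exactly
when one but not both of `t ≤ x`, `t ≤ y` holds, `I(x,z) = I(x,y) ∆ I(y,z)` and hence
`J(x,z) = J(x,y) ∆ J(y,z)`. Let `x ≺ y` and `y ≺ z` with first indices `j` and `k`.
If `j < k`, then `j = min J(x,z)`, and `u_j ∈ I(x,y) ∩ I(x,z)` forces `y - x` and `z - x` to have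
the same sign, which carries the sign condition over; `k < j` is symmetric. If `j = k`, then
`u_j ∈ I(x,y) ∩ I(y,z)` forces `y - x` and `z - y` to have opposite signs, contradicting the two
sign conditions.
-/

open Set
open scoped Interval symmDiff

theorem ENat.sInf_image_natCast_eq_natCast_iff {S : Set ℕ} {j : ℕ} :
    sInf (((↑) : ℕ → ℕ∞) '' S) = j ↔ IsLeast S j := by
  rcases S.eq_empty_or_nonempty with rfl | hS
  · simp [IsLeast]
  · rw [sInf_image, ← ENat.natCast_sInf hS, Nat.cast_inj]
    exact ⟨fun h => h ▸ ⟨Nat.sInf_mem hS, fun m hm => Nat.sInf_le hm⟩, IsLeast.csInf_eq⟩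

theorem IsLeast.symmDiff_of_lt {α : Type*} [Preorder α] {A B : Set α} {a b : α}
    (ha : IsLeast A a) (hb : IsLeast B b) (hab : a < b) : IsLeast (A ∆ B) a := by
  refine ⟨Or.inl ⟨ha.1, fun haB => (hb.2 haB).not_gt hab⟩, ?_⟩
  rintro m (⟨hmA, -⟩ | ⟨hmB, -⟩)
  · exact ha.2 hmA
  · exact hab.le.trans (hb.2 hmB)

namespace Set

variable {α : Type*} [LinearOrder α]

theorem mem_uIoc_iff_xor {a b c : α} : a ∈ Ι b c ↔ Xor (a ≤ b) (a ≤ c) := by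
  rw [mem_uIoc, xor_def, not_le, not_le]
  tauto

theorem uIoc_symmDiff_uIoc (a b c : α) : Ι a b ∆ Ι b c = Ι a c := by
  ext t
  simp only [mem_symmDiff, mem_uIoc_iff_xor, xor_def]
  tauto

end Set

section OrderedRing

variable {R : Type*} [Ring R] [LinearOrder R] [IsStrictOrderedRing R]

theorem sub_mul_sub_pos_of_mem_uIoc {a b c t : R} (hb : t ∈ Ι a b) (hc : t ∈ Ι a c) :
    0 < (b - a) * (c - a) := by
  rw [mem_uIoc] at hb hc
  rcases hb with ⟨hab, htb⟩ | ⟨hba, hta⟩ <;> rcases hc with ⟨hac, htc⟩ | ⟨hca, htc⟩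
  · exact mul_pos (sub_pos.2 (hab.trans_le htb)) (sub_pos.2 (hac.trans_le htc))
  · exact absurd hab (not_lt.2 htc)
  · exact absurd hac (not_lt.2 hta)
  · exact mul_pos_of_neg_of_neg (sub_neg.2 (hba.trans_le hta)) (sub_neg.2 (hca.trans_le htc))

theorem mul_pos_of_mul_pos_of_mul_pos {a b c : R} (hab : 0 < a * b) (hac : 0 < a * c) :
    0 < b * c := by
  rcases pos_and_pos_or_neg_and_neg_of_mul_pos hab with ⟨ha, hb⟩ | ⟨ha, hb⟩
  · exact mul_pos hb (pos_of_mul_pos_right hac ha.le)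
  · exact mul_pos_of_neg_of_neg hb (neg_of_mul_pos_right hac ha.le)

end OrderedRing

def gapIndices (u : ℕ → ℝ) (x y : ℝ) : Set ℕ := Ici 1 ∩ u ⁻¹' Ι x y

section Prec

variable {u s : ℕ → ℝ} {x y z : ℝ}

theorem gapIndices_comm : gapIndices u x y = gapIndices u y x := by
  rw [gapIndices, gapIndices, uIoc_comm]

theorem gapIndices_symmDiff : gapIndices u x y ∆ gapIndices u y z = gapIndices u x z := by
  rw [gapIndices, gapIndices, gapIndices, ← inter_symmDiff_distrib_left, ← preimage_symmDiff,
    uIoc_symmDiff_uIoc]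

theorem firstIdx_eq_natCast_iff {j : ℕ} : firstIdx u x y = j ↔ IsLeast (gapIndices u x y) j :=
  ENat.sInf_image_natCast_eq_natCast_iff

theorem prec_iff : Prec u s x y ↔ ∃ j, IsLeast (gapIndices u x y) j ∧ 0 < (y - x) * s j := by
  simp only [Prec, firstIdx_eq_natCast_iff, gt_iff_lt]

theorem prec_asymm (hxy : Prec u s x y) : ¬ Prec u s y x := by
  rw [prec_iff] at hxy ⊢
  rintro ⟨k, hk, hks⟩
  obtain ⟨j, hj, hjs⟩ := hxy
  obtain rfl : j = k := hj.unique (gapIndices_comm ▸ hk)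
  linarith

theorem prec_trans (hxy : Prec u s x y) (hyz : Prec u s y z) : Prec u s x z := by
  rw [prec_iff] at hxy hyz ⊢
  obtain ⟨j, hj, hjs⟩ := hxy
  obtain ⟨k, hk, hks⟩ := hyz
  rw [← gapIndices_symmDiff]
  rcases lt_trichotomy j k with hjk | rfl | hkj
  · have hj' := hj.symmDiff_of_lt hk hjk
    have hsign : 0 < (y - x) * (z - x) :=
      sub_mul_sub_pos_of_mem_uIoc hj.1.2 (gapIndices_symmDiff ▸ hj').1.2
    exact ⟨j, hj', mul_pos_of_mul_pos_of_mul_pos hsign hjs⟩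
  · have hsign : 0 < (z - y) * (x - y) :=
      sub_mul_sub_pos_of_mem_uIoc hk.1.2 (uIoc_comm x y ▸ hj.1.2)
    linarith [mul_pos_of_mul_pos_of_mul_pos hsign hks]
  · have hk' := symmDiff_comm (gapIndices u x y) _ ▸ hk.symmDiff_of_lt hj hkj
    have hsign : 0 < (y - z) * (x - z) :=
      sub_mul_sub_pos_of_mem_uIoc (uIoc_comm y z ▸ hk.1.2)
        (uIoc_comm x z ▸ (gapIndices_symmDiff ▸ hk').1.2)
    rw [← neg_sub z y, ← neg_sub z x, neg_mul_neg] at hsign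
    exact ⟨k, hk', mul_pos_of_mul_pos_of_mul_pos hsign hks⟩

end Prec

theorem prec_isStrictPartialOrder_general
    (u s : ℕ → ℝ) :
    (∀ x ∈ Set.Icc (0:ℝ) 1, ¬ Prec u s x x) ∧
    (∀ x ∈ Set.Icc (0:ℝ) 1, ∀ y ∈ Set.Icc (0:ℝ) 1, Prec u s x y → ¬ Prec u s y x) ∧
    (∀ x ∈ Set.Icc (0:ℝ) 1, ∀ y ∈ Set.Icc (0:ℝ) 1, ∀ z ∈ Set.Icc (0:ℝ) 1,
      Prec u s x y → Prec u s y z → Prec u s x z) :=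
  ⟨fun _ _ h => prec_asymm h h, fun _ _ _ _ => prec_asymm, fun _ _ _ _ _ _ => prec_trans⟩

/-- the relation `≺` is a strict partial order on `[0,1]`:
irreflexive, asymmetric and transitive. -/
theorem prec_isStrictPartialOrder
    (u s : ℕ → ℝ)
    (hu : ∀ j, 1 ≤ j → u j ∈ Set.Ioo (0:ℝ) 1)
    (hs : ∀ j, 1 ≤ j → s j = 1 ∨ s j = -1) :
    (∀ x ∈ Set.Icc (0:ℝ) 1, ¬ Prec u s x x) ∧
    (∀ x ∈ Set.Icc (0:ℝ) 1, ∀ y ∈ Set.Icc (0:ℝ) 1, Prec u s x y → ¬ Prec u s y x) ∧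
    (∀ x ∈ Set.Icc (0:ℝ) 1, ∀ y ∈ Set.Icc (0:ℝ) 1, ∀ z ∈ Set.Icc (0:ℝ) 1,
      Prec u s x y → Prec u s y z → Prec u s x z) :=
  prec_isStrictPartialOrder_general u s
end

section
/- For every p ∈ (0,1), every n ≥ 1 and every permutation π of {1,…,n}, P_n^p(π) = N_inc(π)/(n−1)! · (1−p)^{des(π)} · p^{n−1−des(π)}. -/
open scoped Classical

/-- The value at position `i` (0-indexed) of the inflation `τ_{b,k}` of a permutation `τ` of
`{0,…,n−1}` at position `k`, with sign `b` (`true` = ⊕, `false` = ⊖): writing `j = τ(k)`,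
every value larger than `j` is increased by `1` and the entry `j` is replaced by the two
consecutive entries `j, j+1` (if `b`) or `j+1, j` (if `¬b`). -/
def inflVal {n : ℕ} (τ : Equiv.Perm (Fin n)) (b : Bool) (k : Fin n) (i : Fin (n + 1)) : ℕ :=
  let j : ℕ := τ k
  if h1 : (i : ℕ) < (k : ℕ) then
    (if (τ ⟨i, lt_trans h1 k.isLt⟩ : ℕ) ≤ j then (τ ⟨i, lt_trans h1 k.isLt⟩ : ℕ)
     else (τ ⟨i, lt_trans h1 k.isLt⟩ : ℕ) + 1)
  else if (i : ℕ) = (k : ℕ) then (if b then j else j + 1)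
  else if (i : ℕ) = (k : ℕ) + 1 then (if b then j + 1 else j)
  else
    (if (τ ⟨(i : ℕ) - 1, by omega⟩ : ℕ) ≤ j then (τ ⟨(i : ℕ) - 1, by omega⟩ : ℕ)
     else (τ ⟨(i : ℕ) - 1, by omega⟩ : ℕ) + 1)

/-- `ρ = τ_{b,k}`, i.e. `ρ` is the inflation of `τ` at position `k` with sign `b`. -/
def IsInflation {n : ℕ} (τ : Equiv.Perm (Fin n)) (b : Bool) (k : Fin n)
    (ρ : Equiv.Perm (Fin (n + 1))) : Prop :=
  ∀ i : Fin (n + 1), (ρ i : ℕ) = inflVal τ b k i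

/-- The recursive separable permutation distributions `P_n^p`:
`P_1^p` is the point mass at the unique permutation of one element, and
`P_{n+1}^p(ρ) = Σ_τ P_n^p(τ) · (1/n) Σ_{k} ( p·1(ρ = τ_{⊕,k}) + (1−p)·1(ρ = τ_{⊖,k}) )`. -/
noncomputable def recSepLaw (p : ℝ) : (n : ℕ) → Equiv.Perm (Fin n) → ℝ
  | 0, _ => 1
  | 1, _ => 1
  | (n + 2), ρ => ∑ τ : Equiv.Perm (Fin (n + 1)), recSepLaw p (n + 1) τ *
      ((1 / ((n : ℝ) + 1)) * ∑ k : Fin (n + 1),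
        (p * (if IsInflation τ true k ρ then (1:ℝ) else 0) +
         (1 - p) * (if IsInflation τ false k ρ then (1:ℝ) else 0)))

/-- The number of descents of a permutation. -/
noncomputable def descents {n : ℕ} (π : Equiv.Perm (Fin n)) : ℕ :=
  (Finset.univ.filter (fun i : Fin n =>
    ∃ h : (i : ℕ) + 1 < n, π ⟨(i : ℕ) + 1, h⟩ < π i)).card

/-- Direct sum `σ ⊕ τ` of permutations. -/
def permDirectSum {m n : ℕ} (σ : Equiv.Perm (Fin m)) (τ : Equiv.Perm (Fin n)) :
    Equiv.Perm (Fin (m + n)) :=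
  finSumFinEquiv.symm.trans ((Equiv.sumCongr σ τ).trans finSumFinEquiv)

/-- Skew sum `σ ⊖ τ` of permutations. -/
def permSkewSum {m n : ℕ} (σ : Equiv.Perm (Fin m)) (τ : Equiv.Perm (Fin n)) :
    Equiv.Perm (Fin (m + n)) :=
  finSumFinEquiv.symm.trans ((Equiv.sumCongr σ τ).trans
    ((Equiv.sumComm (Fin m) (Fin n)).trans (finSumFinEquiv.trans (finCongr (Nat.add_comm n m)))))

/-- Rooted plane binary trees whose internal nodes carry a decoration in `{⊕,⊖}`
(`true` = ⊕, `false` = ⊖) and a label in `ℕ`; a pair (decorated binary tree, labeling of its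
internal nodes) is the same thing as such a labeled decorated tree. -/
inductive LTree where
  | leaf : LTree
  | node : Bool → ℕ → LTree → LTree → LTree

namespace LTree

/-- Number of leaves. -/
def size : LTree → ℕ
  | leaf => 1
  | node _ _ l r => size l + size r

/-- The multiset of labels of the internal nodes. -/
def labels : LTree → Multiset ℕ
  | leaf => 0
  | node _ a l r => a ::ₘ (labels l + labels r)

/-- Labels increase along every root-to-leaf path (each internal node's label is smaller
than all labels in its subtrees). -/
def IncAux : LTree → Prop
  | leaf => True
  | node _ a l r => (∀ b ∈ labels l, a < b) ∧ (∀ b ∈ labels r, a < b) ∧ IncAux l ∧ IncAux r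

/-- The labeling is an increasing labeling: it increases along root-to-leaf paths, and is a
bijection from the internal nodes onto `{1, …, size − 1}`. -/
def Increasing (T : LTree) : Prop :=
  IncAux T ∧ labels T = (Multiset.range (size T - 1)).map (· + 1)

/-- The separable permutation `Perm(T)` associated with a decorated tree. -/
def perm : (T : LTree) → Equiv.Perm (Fin T.size)
  | leaf => Equiv.refl _
  | node b _ l r => if b then permDirectSum (perm l) (perm r) else permSkewSum (perm l) (perm r)

end LTree

/-- `N_inc(π)`: the number of pairs (decorated binary tree, increasing labeling) whose
associated permutation is `π`. -/
noncomputable def Ninc {n : ℕ} (π : Equiv.Perm (Fin n)) : ℕ :=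
  Nat.card {T : LTree // T.Increasing ∧ ∃ h : T.size = n, (finCongr h).permCongr T.perm = π}

/-!
Deleting the node with the largest label `m` from an increasingly labelled decorated tree of
size `m + 1` leaves one of size `m`. That node has two leaves as children; if they are the
leaves `k, k + 1` and the node has decoration `s`, then `Perm` of the big tree is the inflation
`τ_{s,k}` of the permutation `τ` of the small one. Conversely every tree of size `m` can be
grown at any of its `m` leaves with either sign, so
`N_inc(ρ) = ∑_{τ,k,s} [ρ = τ_{s,k}] N_inc(τ)`, the recursion defining `P^p` without the
weights. Since `τ_{⊕,k}` has the descents of `τ` and `τ_{⊖,k}` exactly one more, the weight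
`p` or `1 - p` of the step, divided by `n`, turns `(1-p)^des p^(n-1-des) / (n-1)!` into the same
expression at size `n + 1`, and the formula follows by induction on `n`.

Permutations and trees are compared through their values as functions `ℕ → ℕ`.
-/

open Finset

def bumpAbove (j x : ℕ) : ℕ := if x ≤ j then x else x + 1

theorem bumpAbove_lt_bumpAbove_iff {j x y : ℕ} : bumpAbove j x < bumpAbove j y ↔ x < y := by
  unfold bumpAbove; split_ifs <;> omega

/-- `inflVal`, with the permutation `τ` replaced by an arbitrary `f : ℕ → ℕ`. -/
def inflateFun (f : ℕ → ℕ) (s : Bool) (k i : ℕ) : ℕ :=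
  if i < k then bumpAbove (f k) (f i)
  else if i = k then (if s then f k else f k + 1)
  else if i = k + 1 then (if s then f k + 1 else f k)
  else bumpAbove (f k) (f (i - 1))

section inflateFun

variable {f : ℕ → ℕ} {s : Bool} {k i : ℕ}

theorem inflateFun_of_lt (h : i < k) : inflateFun f s k i = bumpAbove (f k) (f i) := if_pos h

theorem inflateFun_self : inflateFun f s k k = if s then f k else f k + 1 := by
  simp [inflateFun]

theorem inflateFun_succ_self : inflateFun f s k (k + 1) = if s then f k + 1 else f k := by
  simp [inflateFun]

theorem inflateFun_of_gt (h : k + 1 < i) : inflateFun f s k i = bumpAbove (f k) (f (i - 1)) := by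
  simp [inflateFun, show ¬i < k by omega, show i ≠ k by omega, show i ≠ k + 1 by omega]

theorem inflateFun_congr {g : ℕ → ℕ} {n : ℕ} (hfg : ∀ j < n, f j = g j) (hk : k < n)
    (hi : i ≤ n) : inflateFun f s k i = inflateFun g s k i := by
  rcases lt_trichotomy i k with h | rfl | h
  · rw [inflateFun_of_lt h, inflateFun_of_lt h, hfg k hk, hfg i (by omega)]
  · rw [inflateFun_self, inflateFun_self, hfg i hk]
  rcases (show i = k + 1 ∨ k + 1 < i by omega) with rfl | h
  · rw [inflateFun_succ_self, inflateFun_succ_self, hfg k hk]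
  · rw [inflateFun_of_gt h, inflateFun_of_gt h, hfg k hk, hfg (i - 1) (by omega)]

theorem inflateFun_add_const (c : ℕ) :
    inflateFun (fun j => f j + c) s k i = inflateFun f s k i + c := by
  unfold inflateFun bumpAbove
  dsimp only
  split_ifs <;> omega

theorem inflateFun_add_index (N : ℕ) :
    inflateFun f s (N + k) (N + i) = inflateFun (fun j => f (N + j)) s k i := by
  unfold inflateFun
  split_ifs <;> first | omega | rfl | rw [Nat.add_sub_assoc (by omega)]

theorem inflateFun_descent_iff_of_lt (h : i < k) (hne : f i ≠ f k) :
    inflateFun f s k (i + 1) < inflateFun f s k i ↔ f (i + 1) < f i := by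
  rw [inflateFun_of_lt h]
  rcases (show i + 1 < k ∨ i + 1 = k by omega) with h' | rfl
  · rw [inflateFun_of_lt h', bumpAbove_lt_bumpAbove_iff]
  · rw [inflateFun_self]; unfold bumpAbove; split_ifs <;> omega

theorem inflateFun_descent_iff_self :
    inflateFun f s k (k + 1) < inflateFun f s k k ↔ s = false := by
  rw [inflateFun_self, inflateFun_succ_self]; cases s <;> simp

theorem inflateFun_descent_iff_of_gt (hne : f (k + i + 1) ≠ f k) :
    inflateFun f s k (k + 1 + i + 1) < inflateFun f s k (k + 1 + i) ↔
      f (k + i + 1) < f (k + i) := by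
  rw [inflateFun_of_gt (by omega), show k + 1 + i + 1 - 1 = k + i + 1 by omega]
  rcases i with _ | i
  · simp only [Nat.add_zero] at hne ⊢
    rw [inflateFun_succ_self]; unfold bumpAbove; split_ifs <;> omega
  · rw [inflateFun_of_gt (by omega), bumpAbove_lt_bumpAbove_iff,
      show k + 1 + (i + 1) - 1 = k + (i + 1) by omega]

end inflateFun

def descentCount (f : ℕ → ℕ) (n : ℕ) : ℕ := ∑ i ∈ range n, if f (i + 1) < f i then 1 else 0

theorem descentCount_congr {f g : ℕ → ℕ} {n : ℕ} (hfg : ∀ i ≤ n, f i = g i) :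
    descentCount f n = descentCount g n :=
  sum_congr rfl fun i hi => by
    rw [mem_range] at hi
    rw [hfg i hi.le, hfg (i + 1) hi]

theorem descentCount_inflateFun {f : ℕ → ℕ} {m k : ℕ} (hk : k < m)
    (hf : ∀ i < m, i ≠ k → f i ≠ f k) (s : Bool) :
    descentCount (inflateFun f s k) m = descentCount f (m - 1) + if s then 0 else 1 := by
  obtain ⟨r, rfl⟩ : ∃ r, m = k + 1 + r := ⟨m - k - 1, by omega⟩
  unfold descentCount
  rw [show k + 1 + r - 1 = k + r by omega, sum_range_add, sum_range_succ, sum_range_add]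
  have hleft : ∀ i ∈ range k,
      (if inflateFun f s k (i + 1) < inflateFun f s k i then 1 else 0) =
        if f (i + 1) < f i then 1 else 0 := fun i hi => by
    rw [mem_range] at hi
    simp only [inflateFun_descent_iff_of_lt hi (hf i (by omega) (by omega))]
  have hright : ∀ i ∈ range r,
      (if inflateFun f s k (k + 1 + i + 1) < inflateFun f s k (k + 1 + i) then 1 else 0) =
        if f (k + i + 1) < f (k + i) then 1 else 0 := fun i hi => by
    rw [mem_range] at hi
    simp only [inflateFun_descent_iff_of_gt (hf (k + i + 1) (by omega) (by omega))]
  simp only [sum_congr rfl hleft, sum_congr rfl hright, inflateFun_descent_iff_self]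
  cases s <;> simp [add_right_comm]

def permNatFun {n : ℕ} (π : Equiv.Perm (Fin n)) (i : ℕ) : ℕ :=
  if h : i < n then π ⟨i, h⟩ else 0

theorem permNatFun_injOn {n : ℕ} (π : Equiv.Perm (Fin n)) :
    Set.InjOn (permNatFun π) (Set.Iio n) := fun i hi j hj h => by
  rw [Set.mem_Iio] at hi hj
  simpa [permNatFun, dif_pos hi, dif_pos hj, Fin.val_inj] using h

theorem descents_eq_descentCount {n : ℕ} (π : Equiv.Perm (Fin n)) :
    descents π = descentCount (permNatFun π) (n - 1) := by
  rcases n with _ | m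
  · rfl
  rw [descents, card_filter, Fin.sum_univ_castSucc, descentCount, Nat.add_sub_cancel,
    ← Fin.sum_univ_eq_sum_range]
  simp [permNatFun, Fin.castSucc, Fin.castAdd, Fin.castLE]

section IsInflation

variable {m : ℕ} {τ : Equiv.Perm (Fin m)} {s : Bool} {k : Fin m}
  {ρ ρ' : Equiv.Perm (Fin (m + 1))}

theorem isInflation_iff :
    IsInflation τ s k ρ ↔ ∀ i < m + 1, permNatFun ρ i = inflateFun (permNatFun τ) s k i := by
  have hval : ∀ i : Fin (m + 1), inflVal τ s k i = inflateFun (permNatFun τ) s k i := by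
    intro i
    have := k.isLt
    unfold inflVal inflateFun bumpAbove permNatFun
    dsimp only
    simp only [Fin.eta]
    split_ifs <;> omega
  refine ⟨fun h i hi => ?_, fun h i => ?_⟩
  · simpa only [permNatFun, dif_pos hi, hval] using h ⟨i, hi⟩
  · simpa only [permNatFun, dif_pos i.isLt, hval] using h i i.isLt

theorem IsInflation.unique (h : IsInflation τ s k ρ) (h' : IsInflation τ s k ρ') : ρ = ρ' :=
  Equiv.ext fun i => Fin.ext ((h i).trans (h' i).symm)

theorem IsInflation.descents_eq (h : IsInflation τ s k ρ) :
    descents ρ = descents τ + if s then 0 else 1 := by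
  rw [descents_eq_descentCount, descents_eq_descentCount, Nat.add_sub_cancel,
    descentCount_congr (fun i hi => isInflation_iff.1 h i (Nat.lt_succ_of_le hi)),
    descentCount_inflateFun k.isLt (fun i hi hik => (hik <| permNatFun_injOn τ hi k.isLt ·))]

end IsInflation

theorem descents_le {n : ℕ} (π : Equiv.Perm (Fin n)) : descents π ≤ n - 1 := by
  rw [descents_eq_descentCount]
  exact (sum_le_card_nsmul _ _ 1 fun i _ => by split_ifs <;> simp).trans (by simp)

theorem permDirectSum_apply_val {m n : ℕ} (σ : Equiv.Perm (Fin m)) (τ : Equiv.Perm (Fin n))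
    (i : Fin (m + n)) :
    (permDirectSum σ τ i : ℕ) =
      if h : (i : ℕ) < m then (σ ⟨i, h⟩ : ℕ) else (τ ⟨(i : ℕ) - m, by omega⟩ : ℕ) + m := by
  split_ifs with h
  · have e : finSumFinEquiv.symm i = Sum.inl ⟨(i : ℕ), h⟩ := by
      rw [← finSumFinEquiv_symm_apply_castAdd]; congr 1
    simp [permDirectSum, e]
  · have e : finSumFinEquiv.symm i = Sum.inr ⟨(i : ℕ) - m, by omega⟩ := by
      rw [← finSumFinEquiv_symm_apply_natAdd]; congr 1; ext; simp only [Fin.natAdd_mk]; omega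
    simp only [permDirectSum, Equiv.trans_apply, e, Equiv.sumCongr_apply, Sum.map_inr,
      finSumFinEquiv_apply_right, Fin.val_natAdd]
    omega

theorem permSkewSum_apply_val {m n : ℕ} (σ : Equiv.Perm (Fin m)) (τ : Equiv.Perm (Fin n))
    (i : Fin (m + n)) :
    (permSkewSum σ τ i : ℕ) =
      if h : (i : ℕ) < m then (σ ⟨i, h⟩ : ℕ) + n else (τ ⟨(i : ℕ) - m, by omega⟩ : ℕ) := by
  split_ifs with h
  · have e : finSumFinEquiv.symm i = Sum.inl ⟨(i : ℕ), h⟩ := by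
      rw [← finSumFinEquiv_symm_apply_castAdd]; congr 1
    simp [permSkewSum, e]
  · have e : finSumFinEquiv.symm i = Sum.inr ⟨(i : ℕ) - m, by omega⟩ := by
      rw [← finSumFinEquiv_symm_apply_natAdd]; congr 1; ext; simp only [Fin.natAdd_mk]; omega
    simp [permSkewSum, e]

namespace LTree

theorem one_le_size (T : LTree) : 1 ≤ T.size := by
  induction T with
  | leaf => exact le_rfl
  | node _ _ l r ihl _ => exact ihl.trans (Nat.le_add_right _ _)

theorem eq_leaf_of_labels_eq_zero {T : LTree} (h : T.labels = 0) : T = leaf := by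
  cases T with
  | leaf => rfl
  | node => simp [labels] at h

def permFun : LTree → ℕ → ℕ
  | leaf, _ => 0
  | node b _ l r, i =>
      if i < l.size then permFun l i + (if b then 0 else r.size)
      else permFun r (i - l.size) + (if b then l.size else 0)

theorem permFun_node_of_lt {b : Bool} {c : ℕ} {l r : LTree} {i : ℕ} (h : i < l.size) :
    (node b c l r).permFun i = l.permFun i + if b then 0 else r.size := if_pos h

theorem permFun_node_of_le {b : Bool} {c : ℕ} {l r : LTree} {i : ℕ} (h : l.size ≤ i) :
    (node b c l r).permFun i = r.permFun (i - l.size) + if b then l.size else 0 :=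
  if_neg (Nat.not_lt.2 h)

theorem permFun_lt (T : LTree) (i : ℕ) : T.permFun i < T.size := by
  induction T generalizing i with
  | leaf => exact Nat.one_pos
  | node b _ l r ihl ihr =>
    have := ihl i
    have := ihr (i - l.size)
    simp only [permFun, size]
    split_ifs <;> omega

theorem perm_apply_val (T : LTree) (i : Fin T.size) : (T.perm i : ℕ) = T.permFun i := by
  induction T with
  | leaf => exact Nat.lt_one_iff.1 i.isLt
  | node b a l r ihl ihr =>
    have hi : (i : ℕ) < l.size + r.size := i.isLt
    cases b
    · rw [show ((node false a l r).perm i : ℕ) = permSkewSum l.perm r.perm ⟨i, hi⟩ from rfl,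
        permSkewSum_apply_val]
      split_ifs with h
      · rw [ihl, permFun_node_of_lt h]; rfl
      · rw [ihr, permFun_node_of_le (Nat.not_lt.1 h)]; rfl
    · rw [show ((node true a l r).perm i : ℕ) = permDirectSum l.perm r.perm ⟨i, hi⟩ from rfl,
        permDirectSum_apply_val]
      split_ifs with h
      · rw [ihl, permFun_node_of_lt h]; rfl
      · rw [ihr, permFun_node_of_le (Nat.not_lt.1 h)]; rfl

theorem permNatFun_permCongr {T : LTree} {n : ℕ} (h : T.size = n) {i : ℕ} (hi : i < n) :
    permNatFun ((finCongr h).permCongr T.perm) i = T.permFun i := by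
  simp only [permNatFun, dif_pos hi, Equiv.permCongr_apply, finCongr_apply, Fin.val_cast]
  exact perm_apply_val T _

/-- Replaces the `k`-th leaf (counted from the left, from `0`) by a node with decoration `s`,
label `a` and two leaves. -/
def ins (s : Bool) (a : ℕ) : LTree → ℕ → LTree
  | leaf, _ => node s a leaf leaf
  | node b c l r, k =>
      if k < l.size then node b c (ins s a l k) r else node b c l (ins s a r (k - l.size))

theorem size_ins (s : Bool) (a : ℕ) (T : LTree) (k : ℕ) : (T.ins s a k).size = T.size + 1 := by
  induction T generalizing k with
  | leaf => rfl
  | node b c l r ihl ihr =>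
    simp only [ins]
    split_ifs <;> simp only [size, ihl, ihr] <;> omega

theorem labels_ins (s : Bool) (a : ℕ) (T : LTree) (k : ℕ) :
    (T.ins s a k).labels = a ::ₘ T.labels := by
  induction T generalizing k with
  | leaf => rfl
  | node b c l r ihl ihr =>
    simp only [ins]
    split_ifs <;> simp only [labels, ihl, ihr, Multiset.cons_add, Multiset.add_cons,
      Multiset.cons_swap a c]

theorem permFun_ins (s : Bool) (a : ℕ) (T : LTree) {k i : ℕ} (hk : k < T.size)
    (hi : i ≤ T.size) : (T.ins s a k).permFun i = inflateFun T.permFun s k i := by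
  induction T generalizing k i with
  | leaf =>
    obtain rfl : k = 0 := by simp only [size] at hk; omega
    obtain rfl | rfl : i = 0 ∨ i = 1 := by simp only [size] at hi; omega
    all_goals cases s <;> rfl
  | node b c l r ihl ihr =>
    simp only [size] at hk hi
    have hl := l.permFun_lt
    have hr := r.permFun_lt
    by_cases hkl : k < l.size
    · have hsize := size_ins s a l k
      simp only [ins, if_pos hkl]
      by_cases hil : i ≤ l.size
      · rw [permFun_node_of_lt (by omega), ihl hkl hil, ← inflateFun_add_const,
          inflateFun_congr (n := l.size) (fun j hj => (permFun_node_of_lt hj).symm) hkl hil]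
      · rw [permFun_node_of_le (show (l.ins s a k).size ≤ i by omega), inflateFun_of_gt (by omega),
          permFun_node_of_lt hkl, permFun_node_of_le (show l.size ≤ i - 1 by omega), hsize,
          show i - (l.size + 1) = i - 1 - l.size by omega]
        have := hl k; have := hr (i - 1 - l.size)
        unfold bumpAbove; split_ifs <;> omega
    · have hsize := size_ins s a r (k - l.size)
      simp only [ins, if_neg hkl]
      by_cases hil : i < l.size
      · rw [permFun_node_of_lt hil, inflateFun_of_lt (by omega), permFun_node_of_lt hil,
          permFun_node_of_le (show l.size ≤ k by omega), hsize]
        have := hl i; have := hr (k - l.size)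
        unfold bumpAbove; split_ifs <;> omega
      · obtain ⟨k, rfl⟩ := Nat.exists_eq_add_of_le (Nat.not_lt.1 hkl)
        obtain ⟨i, rfl⟩ := Nat.exists_eq_add_of_le (Nat.not_lt.1 hil)
        rw [permFun_node_of_le (by omega), Nat.add_sub_cancel_left, Nat.add_sub_cancel_left,
          ihr (by omega) (by omega), inflateFun_add_index, ← inflateFun_add_const]
        congr 1
        funext j
        rw [permFun_node_of_le (by omega), Nat.add_sub_cancel_left]

theorem isInflation_ins {T : LTree} {n : ℕ} (h : T.size = n) (s : Bool) (a : ℕ) (k : Fin n)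
    (h' : (T.ins s a k).size = n + 1) :
    IsInflation ((finCongr h).permCongr T.perm) s k ((finCongr h').permCongr (T.ins s a k).perm) :=
  isInflation_iff.2 fun i hi => by
    rw [permNatFun_permCongr h' hi, permFun_ins s a T (h ▸ k.isLt) (by omega),
      inflateFun_congr (fun j hj => (permNatFun_permCongr h hj).symm) (h ▸ k.isLt) (by omega)]

def remove (a : ℕ) : LTree → LTree × ℕ × Bool
  | leaf => (leaf, 0, true)
  | node b c l r =>
      if c = a then (leaf, 0, b)
      else if a ∈ l.labels then (node b c (remove a l).1 r, (remove a l).2)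
      else (node b c l (remove a r).1, l.size + (remove a r).2.1, (remove a r).2.2)

theorem remove_ins {a : ℕ} {T : LTree} (ha : a ∉ T.labels) (s : Bool) {k : ℕ}
    (hk : k < T.size) : (T.ins s a k).remove a = (T, k, s) := by
  induction T generalizing k with
  | leaf =>
    obtain rfl : k = 0 := by simp only [size] at hk; omega
    simp [ins, remove]
  | node b c l r ihl ihr =>
    simp only [labels, Multiset.mem_cons, Multiset.mem_add, not_or] at ha
    obtain ⟨hac, hal, har⟩ := ha
    by_cases hkl : k < l.size
    · simp [ins, remove, hkl, Ne.symm hac, labels_ins, ihl hal hkl]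
    · have hkr : k - l.size < r.size := by simp only [size] at hk; omega
      simp only [ins, hkl, ↓reduceIte, remove, Ne.symm hac, hal, ihr har hkr, Prod.mk.injEq,
        and_true, true_and]
      omega

theorem eq_of_ins_eq_ins {a : ℕ} {T T' : LTree} (ha : a ∉ T.labels) (ha' : a ∉ T'.labels)
    {s s' : Bool} {k k' : ℕ} (hk : k < T.size) (hk' : k' < T'.size)
    (h : T.ins s a k = T'.ins s' a k') : (T, k, s) = (T', k', s') := by
  rw [← remove_ins ha s hk, h, remove_ins ha' s' hk']

/-- The node carrying the largest label has only leaves below it, since their labels would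
have to be larger. -/
theorem IncAux.exists_eq_ins {U : LTree} (hU : U.IncAux) {a : ℕ} (ha : a ∈ U.labels)
    (hmax : ∀ b ∈ U.labels, b ≤ a) :
    ∃ (T : LTree) (k : ℕ) (s : Bool), U = T.ins s a k ∧ k < T.size ∧ T.IncAux := by
  induction U with
  | leaf => simp [labels] at ha
  | node b c l r ihl ihr =>
    obtain ⟨hcl, hcr, hl, hr⟩ := hU
    simp only [labels, Multiset.mem_cons, Multiset.mem_add] at ha hmax
    rcases ha with rfl | hal | har
    · have eq_leaf : ∀ t : LTree, (∀ x ∈ t.labels, a < x) → (∀ x ∈ t.labels, x ≤ a) →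
          t = leaf := fun t hlt hle => eq_leaf_of_labels_eq_zero <|
        Multiset.eq_zero_of_forall_notMem fun x hx => (hlt x hx).not_ge (hle x hx)
      obtain rfl := eq_leaf l hcl fun x hx => hmax x (by tauto)
      obtain rfl := eq_leaf r hcr fun x hx => hmax x (by tauto)
      exact ⟨leaf, 0, b, rfl, Nat.one_pos, trivial⟩
    · obtain ⟨T, k, s, rfl, hk, hT⟩ := ihl hl hal fun x hx => hmax x (by tauto)
      refine ⟨node b c T r, k, s, by simp [ins, hk], by simp only [size]; omega,
        fun x hx => hcl x ?_, hcr, hT, hr⟩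
      simp [labels_ins, hx]
    · obtain ⟨T, k, s, rfl, hk, hT⟩ := ihr hr har fun x hx => hmax x (by tauto)
      refine ⟨node b c l T, l.size + k, s, by simp [ins], by simp only [size]; omega,
        hcl, fun x hx => hcr x ?_, hl, hT⟩
      simp [labels_ins, hx]

theorem Increasing.eq_leaf {T : LTree} (hT : T.Increasing) (h : T.size = 1) : T = leaf :=
  eq_leaf_of_labels_eq_zero (by rw [hT.2, h]; rfl)

theorem incAux_ins {T : LTree} (hT : T.IncAux) {a : ℕ} (ha : ∀ b ∈ T.labels, b < a)
    (s : Bool) (k : ℕ) : (T.ins s a k).IncAux := by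
  induction T generalizing k with
  | leaf => simp [ins, IncAux, labels]
  | node b c l r ihl ihr =>
    obtain ⟨hcl, hcr, hl, hr⟩ := hT
    simp only [labels, Multiset.mem_cons, Multiset.mem_add] at ha
    have hca : c < a := ha c (Or.inl rfl)
    simp only [ins]
    split_ifs
    · refine ⟨?_, hcr, ihl hl (fun x hx => ha x (by tauto)) _, hr⟩
      simpa [labels_ins, hca] using hcl
    · refine ⟨hcl, ?_, hl, ihr hr (fun x hx => ha x (by tauto)) _⟩
      simpa [labels_ins, hca] using hcr

theorem Increasing.mem_labels_iff {T : LTree} (hT : T.Increasing) {b : ℕ} :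
    b ∈ T.labels ↔ 1 ≤ b ∧ b < T.size := by
  rw [hT.2, Multiset.mem_map]
  simp only [Multiset.mem_range]
  exact ⟨by rintro ⟨y, hy, rfl⟩; omega, fun h => ⟨b - 1, by omega, by omega⟩⟩

theorem increasing_ins {T : LTree} (hT : T.Increasing) (s : Bool) (k : ℕ) :
    (T.ins s T.size k).Increasing := by
  refine ⟨incAux_ins hT.1 (fun b hb => (hT.mem_labels_iff.1 hb).2) s k, ?_⟩
  obtain ⟨n, hn⟩ := Nat.exists_eq_add_of_le' T.one_le_size
  rw [labels_ins, size_ins, hT.2, hn, Nat.add_sub_cancel, Nat.add_sub_cancel,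
    Multiset.range_succ, Multiset.map_cons]

theorem Increasing.exists_eq_ins {U : LTree} (hU : U.Increasing) {m : ℕ} (hm : 1 ≤ m)
    (hsize : U.size = m + 1) :
    ∃ (T : LTree) (k : ℕ) (s : Bool), U = T.ins s m k ∧ k < m ∧ T.Increasing ∧ T.size = m := by
  obtain ⟨T, k, s, rfl, hk, hT⟩ := hU.1.exists_eq_ins (hU.mem_labels_iff.2 ⟨hm, by omega⟩)
    fun b hb => by have := hU.mem_labels_iff.1 hb; omega
  have hTsize : T.size = m := by rw [size_ins] at hsize; omega
  refine ⟨T, k, s, rfl, hTsize ▸ hk, ⟨hT, ?_⟩, hTsize⟩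
  obtain ⟨n, rfl⟩ := Nat.exists_eq_add_of_le' hm
  have hlabels := hU.2
  rw [labels_ins, hsize, Nat.add_sub_cancel, Multiset.range_succ, Multiset.map_cons,
    Multiset.cons_inj_right] at hlabels
  rw [hlabels, hTsize, Nat.add_sub_cancel]

end LTree

open LTree

abbrev IncTrees {n : ℕ} (π : Equiv.Perm (Fin n)) : Type :=
  {T : LTree // T.Increasing ∧ ∃ h : T.size = n, (finCongr h).permCongr T.perm = π}

abbrev InsertionData {m : ℕ} (ρ : Equiv.Perm (Fin (m + 1))) : Type :=
  Σ x : Equiv.Perm (Fin m) × Fin m × Bool, {_T : IncTrees x.1 // IsInflation x.1 x.2.2 x.2.1 ρ}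

def insertionMap {m : ℕ} (ρ : Equiv.Perm (Fin (m + 1))) (y : InsertionData ρ) : IncTrees ρ :=
  ⟨y.2.1.1.ins y.1.2.2 m y.1.2.1, by
    obtain ⟨⟨τ, k, s⟩, ⟨T, hT, hsize, hperm⟩, hinfl⟩ := y
    dsimp only at hperm hinfl ⊢
    subst hperm
    have hsize' : (T.ins s m k).size = m + 1 := by rw [size_ins, hsize]
    exact ⟨hsize ▸ increasing_ins hT s k, hsize',
      (isInflation_ins hsize s m k hsize').unique hinfl⟩⟩

theorem insertionMap_injective {m : ℕ} (ρ : Equiv.Perm (Fin (m + 1))) :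
    Function.Injective (insertionMap ρ) := by
  rintro ⟨⟨τ, k, s⟩, ⟨T, hT, hsize, hperm⟩, _⟩ ⟨⟨τ', k', s'⟩, ⟨T', hT', hsize', hperm'⟩, _⟩ h
  have hnot : ∀ {T : LTree}, T.Increasing → T.size = m → m ∉ T.labels :=
    fun hT hm hmem => by have := hT.mem_labels_iff.1 hmem; omega
  have := eq_of_ins_eq_ins (hnot hT hsize) (hnot hT' hsize') (hsize ▸ k.isLt) (hsize' ▸ k'.isLt)
    (congrArg Subtype.val h)
  simp only [Prod.mk.injEq] at this
  obtain ⟨rfl, hk, rfl⟩ := this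
  obtain rfl := Fin.ext hk
  obtain rfl := hperm.symm.trans hperm'
  rfl

theorem insertionMap_surjective {m : ℕ} (hm : 1 ≤ m) (ρ : Equiv.Perm (Fin (m + 1))) :
    Function.Surjective (insertionMap ρ) := by
  rintro ⟨U, hU, hUsize, hUperm⟩
  obtain ⟨T, k, s, rfl, hk, hT, hTsize⟩ := hU.exists_eq_ins hm hUsize
  exact ⟨⟨((finCongr hTsize).permCongr T.perm, ⟨k, hk⟩, s), ⟨T, hT, hTsize, rfl⟩,
    hUperm ▸ isInflation_ins hTsize s m ⟨k, hk⟩ hUsize⟩, rfl⟩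

instance (π : Equiv.Perm (Fin 1)) : Subsingleton (IncTrees π) := by
  refine ⟨fun ⟨T, hT, h, _⟩ ⟨T', hT', h', _⟩ => Subtype.ext ?_⟩
  change T = T'
  rw [hT.eq_leaf h, hT'.eq_leaf h']

theorem finite_incTrees : ∀ {n : ℕ} (π : Equiv.Perm (Fin n)), Finite (IncTrees π)
  | 0, π => by
    have : IsEmpty (IncTrees π) :=
      ⟨fun ⟨T, _, h, _⟩ => absurd h (by have := T.one_le_size; omega)⟩
    infer_instance
  | 1, _ => Finite.of_subsingleton
  | m + 2, ρ => by
    have := fun τ : Equiv.Perm (Fin (m + 1)) => finite_incTrees τ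
    exact Finite.of_surjective _ (insertionMap_surjective (Nat.le_add_left 1 m) ρ)

theorem Ninc_one (π : Equiv.Perm (Fin 1)) : Ninc π = 1 :=
  Nat.card_eq_one_iff_unique.2 ⟨inferInstance, ⟨⟨leaf, ⟨trivial, rfl⟩, rfl, Subsingleton.elim _ _⟩⟩⟩

theorem Ninc_eq_sum_isInflation {m : ℕ} (hm : 1 ≤ m) (ρ : Equiv.Perm (Fin (m + 1))) :
    Ninc ρ = ∑ τ : Equiv.Perm (Fin m), ∑ k : Fin m, ∑ s : Bool,
      if IsInflation τ s k ρ then Ninc τ else 0 := by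
  have := fun τ : Equiv.Perm (Fin m) => finite_incTrees τ
  rw [Ninc, ← Nat.card_congr (Equiv.ofBijective _
      ⟨insertionMap_injective ρ, insertionMap_surjective hm ρ⟩), Nat.card_sigma,
    Fintype.sum_prod_type]
  refine sum_congr rfl fun τ _ => ?_
  rw [Fintype.sum_prod_type]
  refine sum_congr rfl fun k _ => sum_congr rfl fun s _ => ?_
  split_ifs with h
  · exact Nat.card_congr (Equiv.subtypeUnivEquiv fun _ => h)
  · have : IsEmpty {_T : IncTrees τ // IsInflation τ s k ρ} := ⟨fun T => h T.2⟩
    exact Nat.card_of_isEmpty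

theorem sign_factor_mul_weight_eq (p c : ℝ) {m d : ℕ} (hd : d ≤ m) (s : Bool) :
    (if s then p else 1 - p) * (1 / ((m : ℝ) + 1)) *
        (c / m.factorial * (1 - p) ^ d * p ^ (m - d)) =
      c / (m + 1).factorial * (1 - p) ^ (d + if s then 0 else 1) *
        p ^ (m + 1 - (d + if s then 0 else 1)) := by
  cases s
  · simp only [Bool.false_eq_true, if_false, Nat.factorial_succ, Nat.cast_mul, Nat.cast_succ,
      pow_succ, show m + 1 - (d + 1) = m - d by omega]
    field_simp
  · simp only [if_true, Nat.add_zero, Nat.factorial_succ, Nat.cast_mul, Nat.cast_succ,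
      show m + 1 - d = m - d + 1 by omega, pow_succ]
    field_simp

theorem recSepLaw_formula_succ {p : ℝ} {m : ℕ}
    (ih : ∀ τ : Equiv.Perm (Fin (m + 1)), recSepLaw p (m + 1) τ =
      (Ninc τ : ℝ) / m.factorial * (1 - p) ^ descents τ * p ^ (m - descents τ))
    (ρ : Equiv.Perm (Fin (m + 2))) :
    recSepLaw p (m + 2) ρ =
      (Ninc ρ : ℝ) / (m + 1).factorial * (1 - p) ^ descents ρ * p ^ (m + 1 - descents ρ) := by
  set w := (1 : ℝ) / (m + 1).factorial * (1 - p) ^ descents ρ * p ^ (m + 1 - descents ρ)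
  have hterm : ∀ τ k s, (if s then p else 1 - p) * (if IsInflation τ s k ρ then 1 else 0) *
      (1 / ((m : ℝ) + 1)) * recSepLaw p (m + 1) τ =
        (if IsInflation τ s k ρ then (Ninc τ : ℝ) else 0) * w := by
    intro τ k s
    by_cases h : IsInflation τ s k ρ
    · have hd : descents τ ≤ m := (descents_le τ).trans_eq (Nat.add_sub_cancel m 1)
      rw [if_pos h, if_pos h, ih, mul_one, sign_factor_mul_weight_eq _ _ hd, ← h.descents_eq]
      ring
    · rw [if_neg h, if_neg h]
      ring
  calc recSepLaw p (m + 2) ρ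
      = ∑ τ, ∑ k, ∑ s : Bool, (if s then p else 1 - p) * (if IsInflation τ s k ρ then 1 else 0) *
          (1 / ((m : ℝ) + 1)) * recSepLaw p (m + 1) τ := by
        rw [recSepLaw]
        refine sum_congr rfl fun τ _ => ?_
        simp only [Fintype.sum_bool, mul_sum]
        refine sum_congr rfl fun k _ => ?_
        simp only [if_true, Bool.false_eq_true, if_false]
        ring
    _ = ∑ τ, ∑ k, ∑ s : Bool, (if IsInflation τ s k ρ then (Ninc τ : ℝ) else 0) * w := by
        simp only [hterm]
    _ = (Ninc ρ : ℝ) * w := by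
        rw [Ninc_eq_sum_isInflation (Nat.le_add_left 1 m)]
        push_cast [Nat.cast_sum, Nat.cast_ite, sum_mul]
        rfl
    _ = _ := by ring

theorem recSepLaw_eq_Ninc_formula_general (p : ℝ) (n : ℕ) (hn : 1 ≤ n)
    (π : Equiv.Perm (Fin n)) :
    recSepLaw p n π = (Ninc π : ℝ) / (Nat.factorial (n - 1) : ℝ) *
      (1 - p) ^ (descents π) * p ^ (n - 1 - descents π) := by
  induction n, hn using Nat.le_induction with
  | base =>
    rw [Ninc_one, Nat.le_zero.1 (descents_le π)]
    simp [recSepLaw]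
  | succ n hn ih =>
    obtain ⟨m, rfl⟩ := Nat.exists_eq_add_of_le' hn
    exact recSepLaw_formula_succ ih π

/-- for every `p ∈ (0,1)`, `n ≥ 1` and every permutation `π` of `{1,…,n}`,
`P_n^p(π) = N_inc(π)/(n−1)! · (1−p)^{des(π)} · p^{n−1−des(π)}`. -/
theorem recSepLaw_eq_Ninc_formula (p : ℝ) (hp : p ∈ Set.Ioo (0:ℝ) 1) (n : ℕ) (hn : 1 ≤ n)
    (π : Equiv.Perm (Fin n)) :
    recSepLaw p n π = (Ninc π : ℝ) / (Nat.factorial (n - 1) : ℝ) *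
      (1 - p) ^ (descents π) * p ^ (n - 1 - descents π) :=
  recSepLaw_eq_Ninc_formula_general p n hn π
end
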